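/- arXiv:1407.3263 — 2 statements merged into one kernel-verified Lean document; each statement's English description precedes it below -/
import Mathlib

section
/- If x ∈ [0,1]^{F×D}, y ∈ [0,1]^F and MFN(0,x,y) is feasible (where 0 denotes the identically-zero partial assignment), then there exists x̄ ∈ ℝ_{≥0}^{F×D} with x̄_{ij} ≤ x_{ij} for all i ∈ F, j ∈ D such that (x̄,y) is feasible for the standard LP relaxation of CFL: x̄_{ij} ≤ y_i for all i ∈ F and j ∈ D; Σ_{i∈F} x̄_{ij} = 1 for all j ∈ D; and Σ_{j∈D} x̄_{ij} ≤ y_i·U_i for all i ∈ F. In particular, the lower bound on the optimum given by MFNLP is no worse than that of the standard LP. -/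
/-!
Formalization of statements from "An LP-rounding approach to capacitated facility location".

`F` is the (finite) type of facilities, `D` the type of clients, `U i` the (positive integer)
capacity of facility `i`.  The multi-commodity flow network `MFN(g, x, y)` has nodes
`j^s, j^t` for clients `j` and `i, i'` for facilities `i`; its arcs and capacities are as in
`MFNArc` / `mfnCap` below.
-/

open scoped BigOperators Classical

/-- Arcs of the multi-commodity flow network `MFN`:
`mid i` is the arc `(i, i')`, `sx j i` is `(j^s, i)`, `gs i j` is `(i, j^s)`,
and `ft i j` is `(i', j^t)`. -/
inductive MFNArc (F D : Type) where
  | mid : F → MFNArc F D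
  | sx  : D → F → MFNArc F D
  | gs  : F → D → MFNArc F D
  | ft  : F → D → MFNArc F D
  deriving DecidableEq, Fintype

/-- Nodes of the multi-commodity flow network `MFN`. -/
inductive MFNNode (F D : Type) where
  | src  : D → MFNNode F D
  | fac  : F → MFNNode F D
  | fac' : F → MFNNode F D
  | sink : D → MFNNode F D
  deriving DecidableEq

variable {F D : Type}

/-- Tail (start node) of an arc. -/
def MFNArc.tail : MFNArc F D → MFNNode F D
  | .mid i => .fac i
  | .sx j _ => .src j
  | .gs i _ => .fac i
  | .ft i _ => .fac' i

/-- Head (end node) of an arc. -/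
def MFNArc.head : MFNArc F D → MFNNode F D
  | .mid i => .fac' i
  | .sx _ i => .fac i
  | .gs _ j => .src j
  | .ft _ j => .sink j

variable [Fintype F] [Fintype D]

/-- Capacity of each arc of `MFN(g, x, y)`; the demand of client `j` is
`d j = 1 - ∑ i, g i j`. -/
noncomputable def mfnCap (U : F → ℕ) (g x : F → D → ℝ) (y : F → ℝ) : MFNArc F D → ℝ
  | .mid i  => y i * ((U i : ℝ) - ∑ j, g i j)
  | .sx j i => x i j
  | .gs i j => g i j
  | .ft i j => y i * (1 - ∑ i', g i' j)

/-- Net outflow of a (single-commodity) flow `f` at node `v`. -/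
noncomputable def netOutflow (f : MFNArc F D → ℝ) (v : MFNNode F D) : ℝ :=
  ∑ a ∈ Finset.univ.filter (fun a : MFNArc F D => a.tail = v), f a -
    ∑ a ∈ Finset.univ.filter (fun a : MFNArc F D => a.head = v), f a

/-- `f = (f_j)_{j ∈ D}` is a feasible multi-commodity flow for `MFN(g, x, y)`:
each `f_j` is nonnegative, conserves flow at every node other than `j^s` and `j^t`,
has net outflow `d j = 1 - ∑ i, g i j` at `j^s`, and the total flow on every arc is
at most its capacity. -/
def IsFeasibleFlow (U : F → ℕ) (g x : F → D → ℝ) (y : F → ℝ)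
    (f : D → MFNArc F D → ℝ) : Prop :=
  (∀ j a, 0 ≤ f j a) ∧
  (∀ (j : D) (v : MFNNode F D), v ≠ MFNNode.src j → v ≠ MFNNode.sink j →
      netOutflow (f j) v = 0) ∧
  (∀ j : D, netOutflow (f j) (MFNNode.src j) = 1 - ∑ i, g i j) ∧
  (∀ a : MFNArc F D, ∑ j, f j a ≤ mfnCap U g x y a)

/-- The multi-commodity flow network `MFN(g, x, y)` is feasible. -/
def MFNFeasible (U : F → ℕ) (g x : F → D → ℝ) (y : F → ℝ) : Prop :=
  ∃ f : D → MFNArc F D → ℝ, IsFeasibleFlow U g x y f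

/-- `g` is a valid partial (fractional) assignment of clients to facilities. -/
def ValidAssign (U : F → ℕ) (g : F → D → ℝ) : Prop :=
  (∀ i j, 0 ≤ g i j) ∧ (∀ j, ∑ i, g i j ≤ 1) ∧ (∀ i, ∑ j, g i j ≤ (U i : ℝ))

/-- Auxiliary equivalence to decompose sums over arcs. -/
def mfnEquiv : MFNArc F D ≃ (F ⊕ (D × F) ⊕ (F × D) ⊕ (F × D)) where
  toFun a := match a with
    | .mid i => .inl i
    | .sx j i => .inr (.inl (j, i))
    | .gs i j => .inr (.inr (.inl (i, j)))
    | .ft i j => .inr (.inr (.inr (i, j)))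
  invFun s := match s with
    | .inl i => .mid i
    | .inr (.inl (j, i)) => .sx j i
    | .inr (.inr (.inl (i, j))) => .gs i j
    | .inr (.inr (.inr (i, j))) => .ft i j
  left_inv a := by cases a <;> rfl
  right_inv s := by rcases s with i | ⟨j, i⟩ | ⟨i, j⟩ | ⟨i, j⟩ <;> rfl

lemma sum_mfnarc (φ : MFNArc F D → ℝ) :
    ∑ a, φ a = (∑ i, φ (.mid i)) + (∑ j, ∑ i, φ (.sx j i)) +
      (∑ i, ∑ j, φ (.gs i j)) + (∑ i, ∑ j, φ (.ft i j)) := by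
  rw [← Equiv.sum_comp (mfnEquiv (F := F) (D := D)).symm φ]
  simp [Fintype.sum_sum_type, Fintype.sum_prod_type, mfnEquiv, add_assoc]

lemma netOutflow_src (f : MFNArc F D → ℝ) (j : D) :
    netOutflow f (MFNNode.src j) = (∑ i, f (.sx j i)) - ∑ i, f (.gs i j) := by
  unfold netOutflow
  rw [Finset.sum_filter, Finset.sum_filter, sum_mfnarc, sum_mfnarc]
  simp [MFNArc.tail, MFNArc.head, Finset.sum_ite_eq, Finset.sum_ite_eq',
    eq_comm (a := j)]

lemma netOutflow_fac (f : MFNArc F D → ℝ) (i : F) :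
    netOutflow f (MFNNode.fac i) =
      (f (.mid i) + ∑ j, f (.gs i j)) - ∑ j, f (.sx j i) := by
  unfold netOutflow
  rw [Finset.sum_filter, Finset.sum_filter, sum_mfnarc, sum_mfnarc]
  simp [MFNArc.tail, MFNArc.head, Finset.sum_ite_eq, Finset.sum_ite_eq',
    eq_comm (a := i)]

lemma netOutflow_fac' (f : MFNArc F D → ℝ) (i : F) :
    netOutflow f (MFNNode.fac' i) = (∑ j, f (.ft i j)) - f (.mid i) := by
  unfold netOutflow
  rw [Finset.sum_filter, Finset.sum_filter, sum_mfnarc, sum_mfnarc]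
  simp [MFNArc.tail, MFNArc.head, Finset.sum_ite_eq, Finset.sum_ite_eq',
    eq_comm (a := i)]

lemma netOutflow_sink (f : MFNArc F D → ℝ) (j : D) :
    netOutflow f (MFNNode.sink j) = -(∑ i, f (.ft i j)) := by
  unfold netOutflow
  rw [Finset.sum_filter, Finset.sum_filter, sum_mfnarc, sum_mfnarc]
  simp [MFNArc.tail, MFNArc.head, Finset.sum_ite_eq, Finset.sum_ite_eq',
    eq_comm (a := j)]

/-- If `MFN(0, x, y)` is feasible, then `(x̄, y)` is feasible for the
standard LP relaxation for some `x̄ ≤ x`; hence MFNLP is at least as strong as the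
standard LP. -/
theorem stmt_4 (U : F → ℕ) (hU : ∀ i, 0 < U i)
    (x : F → D → ℝ) (y : F → ℝ)
    (hx : ∀ i j, 0 ≤ x i j ∧ x i j ≤ 1) (hy : ∀ i, 0 ≤ y i ∧ y i ≤ 1)
    (hfeas : MFNFeasible U (fun _ _ => 0) x y) :
    ∃ xb : F → D → ℝ,
      (∀ i j, 0 ≤ xb i j) ∧ (∀ i j, xb i j ≤ x i j) ∧
      (∀ i j, xb i j ≤ y i) ∧ (∀ j, ∑ i, xb i j = 1) ∧
      (∀ i, ∑ j, xb i j ≤ y i * (U i : ℝ)) := by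
  obtain ⟨f, hpos, hcons, hsrc, hcap⟩ := hfeas
  -- flows on `gs` arcs vanish (zero capacity)
  have hgs0 : ∀ j i j', f j (.gs i j') = 0 := by
    intro j i j'
    have h1 : ∑ j'', f j'' (.gs i j') ≤ 0 := by simpa [mfnCap] using hcap (.gs i j')
    have h2 : (0 : ℝ) ≤ ∑ j'', f j'' (.gs i j') :=
      Finset.sum_nonneg fun j'' _ => hpos j'' _
    have hsum0 : ∑ j'', f j'' (.gs i j') = 0 := le_antisymm h1 h2
    exact (Finset.sum_eq_zero_iff_of_nonneg fun j'' _ => hpos j'' _).mp hsum0 j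
      (Finset.mem_univ j)
  -- commodity `j` carries no flow on `sx j' i` for `j' ≠ j`
  have hsx0 : ∀ j j', j' ≠ j → ∀ i, f j (.sx j' i) = 0 := by
    intro j j' hne i
    have h := hcons j (.src j') (by simp [hne]) (by simp)
    rw [netOutflow_src] at h
    have h' : ∑ i', f j (.sx j' i') = 0 := by
      have : ∑ i', f j (.gs i' j') = 0 := Finset.sum_eq_zero fun i' _ => hgs0 j i' j'
      linarith [h, this]
    exact (Finset.sum_eq_zero_iff_of_nonneg fun i' _ => hpos j _).mp h' i
      (Finset.mem_univ i)
  -- commodity `j` carries no flow on `ft i j'` for `j' ≠ j`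
  have hft0 : ∀ j j', j' ≠ j → ∀ i, f j (.ft i j') = 0 := by
    intro j j' hne i
    have h := hcons j (.sink j') (by simp) (by simp [hne])
    rw [netOutflow_sink] at h
    have h' : ∑ i', f j (.ft i' j') = 0 := by linarith
    exact (Finset.sum_eq_zero_iff_of_nonneg fun i' _ => hpos j _).mp h' i
      (Finset.mem_univ i)
  -- flow on `mid i` equals flow on `sx j i`
  have hmid : ∀ j i, f j (.mid i) = f j (.sx j i) := by
    intro j i
    have h := hcons j (.fac i) (by simp) (by simp)
    rw [netOutflow_fac] at h
    have h1 : ∑ j', f j (.gs i j') = 0 := Finset.sum_eq_zero fun j' _ => hgs0 j i j'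
    have h2 : ∑ j', f j (.sx j' i) = f j (.sx j i) :=
      Finset.sum_eq_single j (fun j' _ hne => hsx0 j j' hne i) (by simp)
    linarith
  -- flow on `ft i j` equals flow on `mid i`
  have hft : ∀ j i, f j (.ft i j) = f j (.mid i) := by
    intro j i
    have h := hcons j (.fac' i) (by simp) (by simp)
    rw [netOutflow_fac'] at h
    have h2 : ∑ j', f j (.ft i j') = f j (.ft i j) :=
      Finset.sum_eq_single j (fun j' _ hne => hft0 j j' hne i) (by simp)
    linarith
  refine ⟨fun i j => f j (.sx j i), fun i j => hpos j _, ?_, ?_, ?_, ?_⟩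
  · -- xb ≤ x
    intro i j
    have h := hcap (.sx j i)
    have h2 : ∑ j', f j' (.sx j i) = f j (.sx j i) :=
      Finset.sum_eq_single j (fun j' _ hne => hsx0 j' j hne.symm i) (by simp)
    simpa [mfnCap, h2] using h
  · -- xb ≤ y
    intro i j
    have h := hcap (.ft i j)
    have h2 : ∑ j', f j' (.ft i j) = f j (.ft i j) :=
      Finset.sum_eq_single j (fun j' _ hne => hft0 j' j hne.symm i) (by simp)
    rw [h2, hft j i, hmid j i] at h
    simpa [mfnCap] using h
  · -- ∑ i, xb i j = 1
    intro j
    have h := hsrc j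
    rw [netOutflow_src] at h
    have h1 : ∑ i, f j (.gs i j) = 0 := Finset.sum_eq_zero fun i _ => hgs0 j i j
    simp only [h1, sub_zero] at h
    simpa using h
  · -- ∑ j, xb i j ≤ y i * U i
    intro i
    have h := hcap (.mid i)
    have h2 : ∑ j, f j (.mid i) = ∑ j, f j (.sx j i) :=
      Finset.sum_congr rfl fun j _ => hmid j i
    rw [h2] at h
    simpa [mfnCap] using h
end

section
/- In the maximum-matching construction with partial assignment g*, suppose f is a feasible flow for MFN(g*,x*,y') satisfying h(S,j) ≥ d_j/2 for every j ∈ D, where d_j = 1 − Σ_{i∈F} g*_{ij}. Define ŷ_i = 1 for i ∈ I and ŷ_i = 2y*_i for i ∈ S, and define x̂_{ij} = g*_{ij} for i ∈ I and x̂_{ij} = d_j·h(i,j)/h(S,j) for i ∈ S (interpreted as 0 when h(S,j) = 0). Then (x̂,ŷ) is semi-integral and c(x̂,ŷ) ≤ 8·c(x*,y*). -/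
/-!
Formalization of statements from "An LP-rounding approach to capacitated facility location".

`F` is the (finite) type of facilities, `D` the type of clients, `U i` the (positive integer)
capacity of facility `i`.  The multi-commodity flow network `MFN(g, x, y)` has nodes
`j^s, j^t` for clients `j` and `i, i'` for facilities `i`; its arcs and capacities are as in
`MFNArc` / `mfnCap` below.
-/

open scoped BigOperators Classical

variable {F D : Type}

variable [Fintype F] [Fintype D]

/-- Arcs of the residual graph `H` of the fractional `b`-matching `z`: an arc from client
`j` to facility `i ∈ I` when `z i j < 2 * x i j`, and an arc from facility `i ∈ I` to
client `j` when `z i j > 0`. -/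
def HStep (I : Finset F) (z x : F → D → ℝ) : F ⊕ D → F ⊕ D → Prop
  | Sum.inr j, Sum.inl i => i ∈ I ∧ z i j < 2 * x i j
  | Sum.inl i, Sum.inr j => i ∈ I ∧ 0 < z i j
  | _, _ => False

/-- Client `j` is unsaturated by the fractional matching `z`. -/
def Unsat (I : Finset F) (z : F → D → ℝ) (j : D) : Prop :=
  ∑ i ∈ I, z i j ≠ 1

/-- Facility `i` belongs to `I_H`: it is reachable in `H` from some unsaturated client. -/
def InIH (I : Finset F) (z x : F → D → ℝ) (i : F) : Prop :=
  ∃ k : D, Unsat I z k ∧ Relation.ReflTransGen (HStep I z x) (Sum.inr k) (Sum.inl i)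

/-- Client `j` belongs to `D_H`: it is reachable in `H` from some unsaturated client
(every unsaturated client itself belongs to `D_H`). -/
def InDH (I : Finset F) (z x : F → D → ℝ) (j : D) : Prop :=
  ∃ k : D, Unsat I z k ∧ Relation.ReflTransGen (HStep I z x) (Sum.inr k) (Sum.inr j)

/-- The cost of a (fractional) solution `(x, y)`: total opening cost plus total
connection cost. -/
noncomputable def cflCost (o : F → ℝ) (c : F → D → ℝ) (x : F → D → ℝ) (y : F → ℝ) : ℝ :=
  ∑ i, o i * y i + ∑ i, ∑ j, c i j * x i j

/-- `(x, y)` is a semi-integral solution: the assignment constraints hold, every opening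
variable is either `1` or at most `1/2`, and (with `S = {i : y i ≠ 1}` and
`d̂ j = ∑ i ∈ S, x i j`) one has `x i j ≤ y i * d̂ j` for every `i ∈ S`. -/
def SemiIntegral (U : F → ℕ) (x : F → D → ℝ) (y : F → ℝ) : Prop :=
  (∀ i j, 0 ≤ x i j ∧ x i j ≤ 1) ∧ (∀ i, 0 ≤ y i ∧ y i ≤ 1) ∧
  (∀ j, ∑ i, x i j = 1) ∧
  (∀ i, ∑ j, x i j ≤ y i * (U i : ℝ)) ∧
  (∀ i, y i = 1 ∨ y i ≤ 1 / 2) ∧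
  (∀ i, y i ≠ 1 → ∀ j,
    x i j ≤ y i * ∑ i' ∈ Finset.univ.filter (fun i' => y i' ≠ 1), x i' j)


/-- Auxiliary equivalence enumerating the arcs of `MFN`. -/
def arcEquiv (F D : Type) : (F ⊕ (D × F) ⊕ (F × D) ⊕ (F × D)) ≃ MFNArc F D where
  toFun := fun x => match x with
    | .inl i => .mid i
    | .inr (.inl (j,i)) => .sx j i
    | .inr (.inr (.inl (i,j))) => .gs i j
    | .inr (.inr (.inr (i,j))) => .ft i j
  invFun := fun a => match a with
    | .mid i => .inl i
    | .sx j i => .inr (.inl (j,i))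
    | .gs i j => .inr (.inr (.inl (i,j)))
    | .ft i j => .inr (.inr (.inr (i,j)))
  left_inv := by rintro (i | ⟨j,i⟩ | ⟨i,j⟩ | ⟨i,j⟩) <;> rfl
  right_inv := by rintro (i | ⟨j,i⟩ | ⟨i,j⟩ | ⟨i,j⟩) <;> rfl

lemma sum_arc (G : MFNArc F D → ℝ) :
    ∑ a, G a = (∑ i, G (.mid i)) + ((∑ j, ∑ i, G (.sx j i))
      + ((∑ i, ∑ j, G (.gs i j)) + (∑ i, ∑ j, G (.ft i j)))) := by
  rw [← (arcEquiv F D).sum_comp G]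
  simp [arcEquiv, Fintype.sum_sum_type, Fintype.sum_prod_type]

lemma net_fac (f : MFNArc F D → ℝ) (i : F) :
    netOutflow f (.fac i) = (f (.mid i) + ∑ k, f (.gs i k)) - (∑ k, f (.sx k i)) := by
  unfold netOutflow
  rw [Finset.sum_filter, Finset.sum_filter, sum_arc, sum_arc]
  simp [MFNArc.tail, MFNArc.head]

lemma net_fac' (f : MFNArc F D → ℝ) (i : F) :
    netOutflow f (.fac' i) = (∑ k, f (.ft i k)) - f (.mid i) := by
  unfold netOutflow
  rw [Finset.sum_filter, Finset.sum_filter, sum_arc, sum_arc]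
  simp [MFNArc.tail, MFNArc.head]

lemma net_src (f : MFNArc F D → ℝ) (k : D) :
    netOutflow f (.src k) = (∑ i, f (.sx k i)) - (∑ i, f (.gs i k)) := by
  unfold netOutflow
  rw [Finset.sum_filter, Finset.sum_filter, sum_arc, sum_arc]
  simp [MFNArc.tail, MFNArc.head]

lemma net_sink (f : MFNArc F D → ℝ) (k : D) :
    netOutflow f (.sink k) = - ∑ i, f (.ft i k) := by
  unfold netOutflow
  rw [Finset.sum_filter, Finset.sum_filter, sum_arc, sum_arc]
  simp [MFNArc.tail, MFNArc.head]

/-- Only members of `I` are reachable (as facilities) in `H`. -/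
lemma inIH_mem {I : Finset F} {z x : F → D → ℝ} {i : F}
    (h : InIH I z x i) : i ∈ I := by
  obtain ⟨k, -, hr⟩ := h
  rcases Relation.ReflTransGen.cases_tail hr with h | ⟨c, -, hc⟩
  · exact absurd h (by simp)
  · cases c with
    | inl i' => exact hc.elim
    | inr j' => exact hc.1

/-- The potential/duality bound: for a single-commodity flow satisfying conservation,
the transport cost into the sink is at most the cost incurred on the `sx`/`gs` arcs. -/
lemma potential_bound
    (dmet : F ⊕ D → F ⊕ D → ℝ)
    (hd0 : ∀ u, dmet u u = 0)
    (hdsym : ∀ u v, dmet u v = dmet v u)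
    (hdtri : ∀ u v w, dmet u w ≤ dmet u v + dmet v w)
    (g : MFNArc F D → ℝ) (hg0 : ∀ a, 0 ≤ g a) (j : D)
    (h1 : ∀ i, ∑ k, g (.sx k i) = g (.mid i) + ∑ k, g (.gs i k))
    (h2 : ∀ i, g (.mid i) = g (.ft i j))
    (h3 : ∀ k, k ≠ j → ∑ i, g (.sx k i) = ∑ i, g (.gs i k)) :
    ∑ i, dmet (.inl i) (.inr j) * g (.ft i j) ≤
      ∑ i, ∑ k, dmet (.inl i) (.inr k) * (g (.sx k i) + g (.gs i k)) := by
  have step1 : ∀ i : F, dmet (.inl i) (.inr j) * g (.ft i j)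
      = ∑ k, (dmet (.inl i) (.inr j) * g (.sx k i)
          - dmet (.inl i) (.inr j) * g (.gs i k)) := by
    intro i
    have hft : g (.ft i j) = ∑ k, g (.sx k i) - ∑ k, g (.gs i k) := by
      rw [h1, ← h2]; ring
    rw [hft, Finset.sum_sub_distrib, ← Finset.mul_sum, ← Finset.mul_sum, mul_sub]
  calc ∑ i, dmet (.inl i) (.inr j) * g (.ft i j)
      = ∑ i, ∑ k, (dmet (.inl i) (.inr j) * g (.sx k i)
          - dmet (.inl i) (.inr j) * g (.gs i k)) :=
        Finset.sum_congr rfl fun i _ => step1 i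
    _ ≤ ∑ i, ∑ k, ((dmet (.inl i) (.inr k) + dmet (.inr k) (.inr j)) * g (.sx k i)
          - (dmet (.inr k) (.inr j) - dmet (.inl i) (.inr k)) * g (.gs i k)) := by
        refine Finset.sum_le_sum fun i _ => Finset.sum_le_sum fun k _ => ?_
        have t1 := hdtri (.inl i) (.inr k) (.inr j)
        have t2 := hdtri (.inr k) (.inl i) (.inr j)
        have hs : dmet (Sum.inr k : F ⊕ D) (.inl i) = dmet (.inl i) (.inr k) := hdsym _ _
        have g1 := hg0 (.sx k i); have g2 := hg0 (.gs i k)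
        rw [hs] at t2
        nlinarith [mul_le_mul_of_nonneg_right t1 g1]
    _ = (∑ i, ∑ k, dmet (.inl i) (.inr k) * (g (.sx k i) + g (.gs i k)))
          + ∑ i, ∑ k, dmet (.inr k) (.inr j) * (g (.sx k i) - g (.gs i k)) := by
        rw [← Finset.sum_add_distrib]
        refine Finset.sum_congr rfl fun i _ => ?_
        rw [← Finset.sum_add_distrib]
        refine Finset.sum_congr rfl fun k _ => ?_
        ring
    _ = ∑ i, ∑ k, dmet (.inl i) (.inr k) * (g (.sx k i) + g (.gs i k)) := by
        have hz : ∑ i, ∑ k, dmet (.inr k) (.inr j) * (g (.sx k i) - g (.gs i k)) = 0 := by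
          rw [Finset.sum_comm]
          refine Finset.sum_eq_zero fun k _ => ?_
          by_cases hk : k = j
          · subst hk; simp [hd0]
          · rw [← Finset.mul_sum, Finset.sum_sub_distrib, h3 k hk]; simp
        rw [hz, add_zero]


/-- Given a feasible flow for `MFN(g*, x*, y')` in which every client
sinks at least half of its demand in `S`, the rounded pair `(x̂, ŷ)` is semi-integral and
costs at most `8` times the cost of `(x*, y*)`. -/
theorem stmt_13
    (U : F → ℕ) (hU : ∀ i, 0 < U i)
    (xstar : F → D → ℝ) (ystar : F → ℝ)
    (hxs : ∀ i j, 0 ≤ xstar i j ∧ xstar i j ≤ 1)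
    (hys : ∀ i, 0 ≤ ystar i ∧ ystar i ≤ 1)
    (y' : F → ℝ) (hy' : ∀ i, y' i = if (1 / 4 : ℝ) ≤ ystar i then 1 else ystar i)
    (I : Finset F) (hI : ∀ i, i ∈ I ↔ y' i = 1)
    (z : F → D → ℝ)
    (hz0 : ∀ i j, 0 ≤ z i j)
    (hzx : ∀ i ∈ I, ∀ j, z i j ≤ 2 * xstar i j)
    (hzoff : ∀ i ∉ I, ∀ j, z i j = 0)
    (hz1 : ∀ j, ∑ i ∈ I, z i j ≤ 1)
    (hzU : ∀ i ∈ I, ∑ j, z i j ≤ (U i : ℝ))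
    (hzmax : ∀ z' : F → D → ℝ, (∀ i j, 0 ≤ z' i j) →
      (∀ i ∈ I, ∀ j, z' i j ≤ 2 * xstar i j) →
      (∀ j, ∑ i ∈ I, z' i j ≤ 1) → (∀ i ∈ I, ∑ j, z' i j ≤ (U i : ℝ)) →
      ∑ i ∈ I, ∑ j, z' i j ≤ ∑ i ∈ I, ∑ j, z i j)
    (gstar : F → D → ℝ)
    (hgstar : ∀ i j, gstar i j =
      if InIH I z xstar i then z i j
      else if i ∈ I ∧ ¬ InDH I z xstar j then z i j else 0)
    (dmet : F ⊕ D → F ⊕ D → ℝ)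
    (hd0 : ∀ u, dmet u u = 0)
    (hdsym : ∀ u v, dmet u v = dmet v u)
    (hdtri : ∀ u v w, dmet u w ≤ dmet u v + dmet v w)
    (o : F → ℝ) (ho : ∀ i, 0 ≤ o i)
    (f : D → MFNArc F D → ℝ)
    (hf : IsFeasibleFlow U gstar xstar y' f)
    (hhalf : ∀ j : D, (1 - ∑ i, gstar i j) / 2 ≤
      ∑ i ∈ Finset.univ.filter (fun i => i ∉ I), f j (MFNArc.mid i))
    (xhat : F → D → ℝ) (yhat : F → ℝ)
    (hyhat : ∀ i, yhat i = if i ∈ I then 1 else 2 * ystar i)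
    (hxhat : ∀ i j, xhat i j = if i ∈ I then gstar i j
      else (1 - ∑ i', gstar i' j) * f j (MFNArc.mid i) /
        ∑ i' ∈ Finset.univ.filter (fun i' => i' ∉ I), f j (MFNArc.mid i')) :
    SemiIntegral U xhat yhat ∧
      cflCost o (fun i j => dmet (Sum.inl i) (Sum.inr j)) xhat yhat ≤
        8 * cflCost o (fun i j => dmet (Sum.inl i) (Sum.inr j)) xstar ystar := by
    classical
  obtain ⟨hf0, hfc, hfs, hfcap⟩ := hf
  set S : Finset F := Finset.univ.filter (fun i => i ∉ I) with hS_def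
  have hdnn : ∀ u v, 0 ≤ dmet u v := by
    intro u v
    have h := hdtri u v u
    have h2 := hdsym v u
    have h0 := hd0 u
    linarith
  -- basic facts about gstar
  have hgz : ∀ i j, 0 ≤ gstar i j := by
    intro i j; rw [hgstar]; split_ifs
    · exact hz0 i j
    · exact hz0 i j
    · norm_num
  have hglez : ∀ i j, gstar i j ≤ z i j := by
    intro i j; rw [hgstar]; split_ifs
    · exact le_rfl
    · exact le_rfl
    · exact hz0 i j
  have hgoff : ∀ i, i ∉ I → ∀ j, gstar i j = 0 := by
    intro i hi j; rw [hgstar]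
    have hz' := hzoff i hi j
    split_ifs <;> simp [hz']
  have hsumz : ∀ j, ∑ i, z i j = ∑ i ∈ I, z i j := fun j =>
    (Finset.sum_subset I.subset_univ (fun i _ hi => hzoff i hi j)).symm
  have hsumg_le1 : ∀ j, ∑ i, gstar i j ≤ 1 := by
    intro j
    calc ∑ i, gstar i j ≤ ∑ i, z i j := Finset.sum_le_sum fun i _ => hglez i j
      _ = ∑ i ∈ I, z i j := hsumz j
      _ ≤ 1 := hz1 j
  have hsumg_nn : ∀ j, 0 ≤ ∑ i, gstar i j := fun j =>
    Finset.sum_nonneg fun i _ => hgz i j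
  have hg2x : ∀ i j, gstar i j ≤ 2 * xstar i j := by
    intro i j
    by_cases hi : i ∈ I
    · exact le_trans (hglez i j) (hzx i hi j)
    · rw [hgoff i hi j]; have := (hxs i j).1; linarith
  -- facts about y'
  have hSy : ∀ i, i ∉ I → y' i = ystar i ∧ ystar i < 1/4 := by
    intro i hi
    have hne : y' i ≠ 1 := fun h => hi ((hI i).2 h)
    rw [hy'] at hne ⊢
    split_ifs at hne ⊢ with h
    · exact absurd rfl hne
    · exact ⟨rfl, not_le.1 h⟩
  have hIy : ∀ i, i ∈ I → 1/4 ≤ ystar i := by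
    intro i hi
    have h1 : y' i = 1 := (hI i).1 hi
    rw [hy'] at h1
    split_ifs at h1 with h
    · exact h
    · rw [h1] at h; norm_num at h
  -- flow facts
  have hft0 : ∀ (j k : D), k ≠ j → ∀ i, f j (MFNArc.ft i k) = 0 := by
    intro j k hk i
    have hcons := hfc j (MFNNode.sink k) (by simp) (by simp [hk])
    rw [net_sink] at hcons
    have hsum : ∑ i, f j (MFNArc.ft i k) = 0 := by linarith
    exact (Finset.sum_eq_zero_iff_of_nonneg
      (fun i _ => hf0 j (MFNArc.ft i k))).1 hsum i (Finset.mem_univ i)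
  have hmidft : ∀ (j : D) (i : F), f j (MFNArc.mid i) = f j (MFNArc.ft i j) := by
    intro j i
    have hcons := hfc j (MFNNode.fac' i) (by simp) (by simp)
    rw [net_fac'] at hcons
    have hsum : ∑ k, f j (MFNArc.ft i k) = f j (MFNArc.ft i j) :=
      Finset.sum_eq_single j (fun k _ hk => hft0 j k hk i) (by simp)
    linarith
  have hfac : ∀ (j : D) (i : F), ∑ k, f j (MFNArc.sx k i)
      = f j (MFNArc.mid i) + ∑ k, f j (MFNArc.gs i k) := by
    intro j i
    have hcons := hfc j (MFNNode.fac i) (by simp) (by simp)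
    rw [net_fac] at hcons; linarith
  have hsrc0 : ∀ (j k : D), k ≠ j →
      ∑ i, f j (MFNArc.sx k i) = ∑ i, f j (MFNArc.gs i k) := by
    intro j k hk
    have hcons := hfc j (MFNNode.src k) (by simp [hk]) (by simp)
    rw [net_src] at hcons; linarith
  have hft_cap : ∀ (i : F) (j : D),
      f j (MFNArc.ft i j) ≤ y' i * (1 - ∑ i', gstar i' j) := by
    intro i j
    have hcap : ∑ j', f j' (MFNArc.ft i j) ≤ y' i * (1 - ∑ i', gstar i' j) :=
      hfcap (MFNArc.ft i j)
    have hle : f j (MFNArc.ft i j) ≤ ∑ j', f j' (MFNArc.ft i j) :=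
      Finset.single_le_sum (f := fun j' => f j' (MFNArc.ft i j))
        (fun j' _ => hf0 j' _) (Finset.mem_univ j)
    linarith
  -- xhat facts
  have hSsum_nn : ∀ j, 0 ≤ ∑ i ∈ S, f j (MFNArc.mid i) := fun j =>
    Finset.sum_nonneg fun i _ => hf0 j _
  have hdS2 : ∀ j, 1 - ∑ i, gstar i j ≤ 2 * ∑ i ∈ S, f j (MFNArc.mid i) := by
    intro j; have := hhalf j; linarith
  have hxnn : ∀ i j, 0 ≤ xhat i j := by
    intro i j; rw [hxhat]; split_ifs with h
    · exact hgz i j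
    · exact div_nonneg (mul_nonneg (by linarith [hsumg_le1 j]) (hf0 j _)) (hSsum_nn j)
  have hx2f : ∀ i, i ∉ I → ∀ j, xhat i j ≤ 2 * f j (MFNArc.mid i) := by
    intro i hi j
    rw [hxhat, if_neg hi]
    by_cases h0 : ∑ i' ∈ S, f j (MFNArc.mid i') = 0
    · rw [h0, div_zero]
      exact mul_nonneg (by norm_num) (hf0 j _)
    · have hpos : 0 < ∑ i' ∈ S, f j (MFNArc.mid i') :=
        lt_of_le_of_ne (hSsum_nn j) (Ne.symm h0)
      rw [div_le_iff₀ hpos]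
      have h1 := hdS2 j
      nlinarith [hf0 j (MFNArc.mid i)]
  have hfleS : ∀ i, i ∉ I → ∀ j, f j (MFNArc.mid i) ≤ ∑ i' ∈ S, f j (MFNArc.mid i') := by
    intro i hi j
    exact Finset.single_le_sum (fun i' _ => hf0 j _) (by simp [hS_def, hi])
  have hrow : ∀ j, ∑ i ∈ S, xhat i j = 1 - ∑ i', gstar i' j := by
    intro j
    by_cases h0 : ∑ i' ∈ S, f j (MFNArc.mid i') = 0
    · have hzero : 1 - ∑ i', gstar i' j = 0 := by
        have h1 := hdS2 j; rw [h0] at h1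
        have h2 := hsumg_le1 j; linarith
      rw [hzero]
      refine Finset.sum_eq_zero fun i hi => ?_
      rw [hxhat, if_neg (by simpa [hS_def] using hi), hzero]
      simp
    · have heq : ∑ i ∈ S, xhat i j
          = ∑ i ∈ S, (1 - ∑ i', gstar i' j) * f j (MFNArc.mid i)
              / (∑ i' ∈ S, f j (MFNArc.mid i')) := by
        refine Finset.sum_congr rfl fun i hi => ?_
        rw [hxhat, if_neg (by simpa [hS_def] using hi)]
      rw [heq, ← Finset.sum_div, ← Finset.mul_sum, mul_div_assoc, div_self h0, mul_one]
  have hx_le1 : ∀ i j, xhat i j ≤ 1 := by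
    intro i j
    by_cases hi : i ∈ I
    · rw [hxhat, if_pos hi]
      calc gstar i j ≤ z i j := hglez i j
        _ ≤ ∑ i' ∈ I, z i' j := Finset.single_le_sum (fun i' _ => hz0 i' j) hi
        _ ≤ 1 := hz1 j
    · rw [hxhat, if_neg hi]
      by_cases h0 : ∑ i' ∈ S, f j (MFNArc.mid i') = 0
      · rw [h0, div_zero]; norm_num
      · have hpos : 0 < ∑ i' ∈ S, f j (MFNArc.mid i') :=
          lt_of_le_of_ne (hSsum_nn j) (Ne.symm h0)
        rw [div_le_one hpos]
        have hfle := hfleS i hi j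
        have hd1 : 1 - ∑ i', gstar i' j ≤ 1 := by linarith [hsumg_nn j]
        have hdnn' : 0 ≤ 1 - ∑ i', gstar i' j := by linarith [hsumg_le1 j]
        nlinarith [hf0 j (MFNArc.mid i)]
  -- yhat facts
  have hyb : ∀ i, 0 ≤ yhat i ∧ yhat i ≤ 1 := by
    intro i; rw [hyhat]; split_ifs with hi
    · norm_num
    · have h1 := (hSy i hi).2
      have h2 := (hys i).1
      constructor <;> linarith
  have hy_dichot : ∀ i, yhat i = 1 ∨ yhat i ≤ 1/2 := by
    intro i; rw [hyhat]; split_ifs with hi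
    · exact Or.inl rfl
    · right; have := (hSy i hi).2; linarith
  have hyne : ∀ i, yhat i ≠ 1 ↔ i ∉ I := by
    intro i; rw [hyhat]; split_ifs with hi
    · simp [hi]
    · have h1 := (hSy i hi).2
      have h2 := (hys i).1
      constructor
      · intro _; exact hi
      · intro _ hcontra; linarith [hcontra]
  -- row sums equal one
  have hrow1 : ∀ j, ∑ i, xhat i j = 1 := by
    intro j
    have hsplit := Finset.sum_filter_add_sum_filter_not Finset.univ
      (fun i => i ∈ I) (fun i => xhat i j)
    rw [← hS_def] at hsplit
    have hIpart : ∑ i ∈ Finset.univ.filter (fun i => i ∈ I), xhat i j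
        = ∑ i, gstar i j := by
      rw [Finset.sum_congr rfl (fun i hi => by
        rw [hxhat, if_pos (Finset.mem_filter.1 hi).2])]
      refine Finset.sum_subset (Finset.filter_subset _ _) fun i _ hi => ?_
      exact hgoff i (fun h => hi (Finset.mem_filter.2 ⟨Finset.mem_univ i, h⟩)) j
    rw [← hsplit, hIpart, hrow j]
    ring
  -- capacity constraint
  have hcapx : ∀ i, ∑ j, xhat i j ≤ yhat i * (U i : ℝ) := by
    intro i
    by_cases hi : i ∈ I
    · rw [hyhat, if_pos hi, one_mul]
      calc ∑ j, xhat i j = ∑ j, gstar i j :=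
            Finset.sum_congr rfl fun j _ => by rw [hxhat, if_pos hi]
        _ ≤ ∑ j, z i j := Finset.sum_le_sum fun j _ => hglez i j
        _ ≤ (U i : ℝ) := hzU i hi
    · rw [hyhat, if_neg hi]
      have hcap : ∑ j, f j (MFNArc.mid i) ≤ y' i * ((U i : ℝ) - ∑ j, gstar i j) :=
        hfcap (MFNArc.mid i)
      have hy'e := (hSy i hi).1
      have h1 : ∑ j, xhat i j ≤ 2 * ∑ j, f j (MFNArc.mid i) := by
        rw [Finset.mul_sum]
        exact Finset.sum_le_sum fun j _ => hx2f i hi j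
      have h2 : y' i * ((U i : ℝ) - ∑ j, gstar i j) ≤ ystar i * (U i : ℝ) := by
        rw [hy'e]
        have h3 := (hys i).1
        have hg : (0:ℝ) ≤ ∑ j, gstar i j := Finset.sum_nonneg fun j _ => hgz i j
        nlinarith
      linarith
  -- condition (iii)
  have hfilter : Finset.univ.filter (fun i' => yhat i' ≠ 1) = S := by
    rw [hS_def]; ext i; simp [hyne i]
  have hiii : ∀ i, yhat i ≠ 1 → ∀ j, xhat i j ≤
      yhat i * ∑ i' ∈ Finset.univ.filter (fun i' => yhat i' ≠ 1), xhat i' j := by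
    intro i hyi j
    have hi : i ∉ I := (hyne i).1 hyi
    rw [hfilter, hrow j, hyhat, if_neg hi]
    calc xhat i j ≤ 2 * f j (MFNArc.mid i) := hx2f i hi j
      _ ≤ 2 * (y' i * (1 - ∑ i', gstar i' j)) := by
          have h1 := hft_cap i j
          have h2 := hmidft j i
          linarith
      _ = 2 * ystar i * (1 - ∑ i', gstar i' j) := by rw [(hSy i hi).1]; ring
  -- cost: opening
  have hopen : ∑ i, o i * yhat i ≤ 4 * ∑ i, o i * ystar i := by
    rw [Finset.mul_sum]
    refine Finset.sum_le_sum fun i _ => ?_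
    rw [hyhat]; split_ifs with hi
    · have h1 := hIy i hi
      nlinarith [mul_nonneg (ho i) (show (0:ℝ) ≤ 4 * ystar i - 1 by linarith)]
    · nlinarith [mul_nonneg (ho i) (hys i).1]
  -- cost: connection
  have hpot : ∀ j : D, ∑ i, dmet (Sum.inl i) (Sum.inr j) * f j (MFNArc.ft i j) ≤
      ∑ i, ∑ k, dmet (Sum.inl i) (Sum.inr k)
        * (f j (MFNArc.sx k i) + f j (MFNArc.gs i k)) :=
    fun j => potential_bound dmet hd0 hdsym hdtri (f j) (hf0 j) j
      (hfac j) (hmidft j) (hsrc0 j)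
  have hT : ∑ i, ∑ j, dmet (Sum.inl i) (Sum.inr j) * f j (MFNArc.ft i j)
      ≤ 3 * ∑ i, ∑ k, dmet (Sum.inl i) (Sum.inr k) * xstar i k := by
    calc ∑ i, ∑ j, dmet (Sum.inl i) (Sum.inr j) * f j (MFNArc.ft i j)
        = ∑ j, ∑ i, dmet (Sum.inl i) (Sum.inr j) * f j (MFNArc.ft i j) :=
          Finset.sum_comm
      _ ≤ ∑ j, ∑ i, ∑ k, dmet (Sum.inl i) (Sum.inr k)
            * (f j (MFNArc.sx k i) + f j (MFNArc.gs i k)) :=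
          Finset.sum_le_sum fun j _ => hpot j
      _ = ∑ i, ∑ k, dmet (Sum.inl i) (Sum.inr k)
            * ((∑ j, f j (MFNArc.sx k i)) + (∑ j, f j (MFNArc.gs i k))) := by
          rw [Finset.sum_comm]
          refine Finset.sum_congr rfl fun i _ => ?_
          rw [Finset.sum_comm]
          refine Finset.sum_congr rfl fun k _ => ?_
          rw [← Finset.mul_sum, Finset.sum_add_distrib]
      _ ≤ ∑ i, ∑ k, dmet (Sum.inl i) (Sum.inr k) * (3 * xstar i k) := by
          refine Finset.sum_le_sum fun i _ => Finset.sum_le_sum fun k _ => ?_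
          refine mul_le_mul_of_nonneg_left ?_ (hdnn _ _)
          have hc1 : ∑ j, f j (MFNArc.sx k i) ≤ xstar i k := hfcap (MFNArc.sx k i)
          have hc2 : ∑ j, f j (MFNArc.gs i k) ≤ gstar i k := hfcap (MFNArc.gs i k)
          have := hg2x i k
          linarith
      _ = 3 * ∑ i, ∑ k, dmet (Sum.inl i) (Sum.inr k) * xstar i k := by
          rw [Finset.mul_sum]
          refine Finset.sum_congr rfl fun i _ => ?_
          rw [Finset.mul_sum]
          exact Finset.sum_congr rfl fun k _ => by ring
  have hconn : ∑ i, ∑ j, dmet (Sum.inl i) (Sum.inr j) * xhat i j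
      ≤ 8 * ∑ i, ∑ j, dmet (Sum.inl i) (Sum.inr j) * xstar i j := by
    have step : ∑ i, ∑ j, dmet (Sum.inl i) (Sum.inr j) * xhat i j
        ≤ ∑ i, ∑ j, (2 * (dmet (Sum.inl i) (Sum.inr j) * xstar i j)
            + 2 * (dmet (Sum.inl i) (Sum.inr j) * f j (MFNArc.ft i j))) := by
      refine Finset.sum_le_sum fun i _ => Finset.sum_le_sum fun j _ => ?_
      by_cases hi : i ∈ I
      · have hx : xhat i j = gstar i j := by rw [hxhat, if_pos hi]
        have hgb := hg2x i j
        have hft_nn : 0 ≤ f j (MFNArc.ft i j) := hf0 j _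
        have hd' := hdnn (Sum.inl i) (Sum.inr j)
        rw [hx]
        nlinarith
      · have hx := hx2f i hi j
        have hm := hmidft j i
        have hd' := hdnn (Sum.inl i) (Sum.inr j)
        have hx_nn := (hxs i j).1
        nlinarith
    calc ∑ i, ∑ j, dmet (Sum.inl i) (Sum.inr j) * xhat i j
        ≤ ∑ i, ∑ j, (2 * (dmet (Sum.inl i) (Sum.inr j) * xstar i j)
            + 2 * (dmet (Sum.inl i) (Sum.inr j) * f j (MFNArc.ft i j))) := step
      _ = 2 * (∑ i, ∑ j, dmet (Sum.inl i) (Sum.inr j) * xstar i j)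
            + 2 * ∑ i, ∑ j, dmet (Sum.inl i) (Sum.inr j) * f j (MFNArc.ft i j) := by
          simp only [Finset.sum_add_distrib, ← Finset.mul_sum]
      _ ≤ 2 * (∑ i, ∑ j, dmet (Sum.inl i) (Sum.inr j) * xstar i j)
            + 2 * (3 * ∑ i, ∑ k, dmet (Sum.inl i) (Sum.inr k) * xstar i k) := by
          linarith [hT]
      _ = 8 * ∑ i, ∑ j, dmet (Sum.inl i) (Sum.inr j) * xstar i j := by ring
  constructor
  · exact ⟨fun i j => ⟨hxnn i j, hx_le1 i j⟩, hyb, hrow1, hcapx, hy_dichot, hiii⟩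
  · have hopen_nn : 0 ≤ ∑ i, o i * ystar i :=
      Finset.sum_nonneg fun i _ => mul_nonneg (ho i) (hys i).1
    simp only [cflCost]
    linarith [hopen, hconn]
end
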